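/- (Generalized Drawdown Modulation Lemma, sufficiency.) Consider a portfolio of n stocks with account value V(k+1) = V(k) + ⟨I(k), X(k)⟩, V(0) > 0, where for every k and every i the realized return satisfies X_min,i ≤ X_i(k) ≤ X_max,i. If for every stage k < N the investment vector satisfies ⟨|X_min|, I⁺(k)⟩ − ⟨X_max, I⁻(k)⟩ ≤ M(k)·V(k), where M(k) = (d_max − d(k))/(1 − d(k)), then d(k) ≤ d_max and V(k) > 0 for every stage k = 0, 1, …, N. -/

import Mathlib

/-- Running maximum `V_max(k) = max_{0 ≤ i ≤ k} V(i)` of the account value. -/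
noncomputable def runMax (V : ℕ → ℝ) (k : ℕ) : ℝ :=
  (Finset.range (k + 1)).sup' Finset.nonempty_range_add_one V

/-- Percentage drawdown `d(k) = (V_max(k) - V(k)) / V_max(k)`. -/
noncomputable def drawdown (V : ℕ → ℝ) (k : ℕ) : ℝ :=
  (runMax V k - V k) / runMax V k

/-!
Since `1 - d(k) = V(k) / V_max(k)`, the modulated budget `(d_max - d(k)) / (1 - d(k)) · V(k)`
is exactly `V(k) - (1 - d_max)·V_max(k)`, the height of the account above the floor
`(1 - d_max)·V_max(k)`. The return bounds make the worst-case loss `⟨|X_min|, I⁺⟩ - ⟨X_max, I⁻⟩`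
dominate the actual loss `-⟨I, X⟩`, so the account never falls below the floor, and a new
running maximum only lifts the floor to a fraction of the current value. Finally
`d(k) ≤ d_max` is the statement `(1 - d_max)·V_max(k) ≤ V(k)`, which also forces `V(k) > 0`.
-/

open Finset

def worstLoss {ι : Type*} [Fintype ι] (Xmin Xmax I : ι → ℝ) : ℝ :=
  (∑ i, |Xmin i| * max (I i) 0) - ∑ i, Xmax i * min (I i) 0

lemma neg_worstLoss_le_sum_mul {ι : Type*} [Fintype ι] {Xmin Xmax I X : ι → ℝ}
    (hX : ∀ i, Xmin i ≤ X i ∧ X i ≤ Xmax i) :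
    -worstLoss Xmin Xmax I ≤ ∑ i, I i * X i := by
  rw [worstLoss, neg_sub, ← sum_sub_distrib]
  refine sum_le_sum fun i _ ↦ ?_
  obtain ⟨hlo, hhi⟩ := hX i
  have habs : -|Xmin i| ≤ Xmin i := neg_abs_le _
  rcases le_total (I i) 0 with hI | hI
  · rw [max_eq_right hI, min_eq_left hI]
    nlinarith
  · rw [max_eq_left hI, min_eq_right hI]
    nlinarith

lemma runMax_zero (V : ℕ → ℝ) : runMax V 0 = V 0 := by
  simp [runMax]

lemma runMax_succ (V : ℕ → ℝ) (k : ℕ) :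
    runMax V (k + 1) = max (V (k + 1)) (runMax V k) := by
  simp only [runMax, range_add_one (n := k + 1)]
  exact sup'_insert ..

lemma le_runMax (V : ℕ → ℝ) {j k : ℕ} (h : j ≤ k) : V j ≤ runMax V k :=
  le_sup' V (mem_range.mpr (Nat.lt_succ_of_le h))

section Drawdown

variable {V : ℕ → ℝ} {k : ℕ}

lemma runMax_pos (hV0 : 0 < V 0) (k : ℕ) : 0 < runMax V k :=
  hV0.trans_le (le_runMax V k.zero_le)

lemma one_sub_mul_runMax_succ_le {c : ℝ} (hc : 0 ≤ c) (hV : 0 ≤ V (k + 1))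
    (hfloor : (1 - c) * runMax V k ≤ V (k + 1)) :
    (1 - c) * runMax V (k + 1) ≤ V (k + 1) := by
  rcases le_or_gt c 1 with hc1 | hc1
  · rw [runMax_succ, mul_max_of_nonneg _ _ (by linarith)]
    exact max_le (mul_le_of_le_one_left hV (by linarith)) hfloor
  · nlinarith [le_runMax V (le_refl (k + 1))]

lemma one_sub_drawdown (hM : runMax V k ≠ 0) : 1 - drawdown V k = V k / runMax V k := by
  rw [drawdown, one_sub_div hM, sub_sub_cancel]

lemma drawdown_le_iff {c : ℝ} (hM : 0 < runMax V k) :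
    drawdown V k ≤ c ↔ (1 - c) * runMax V k ≤ V k := by
  rw [drawdown, div_le_iff₀ hM]
  constructor <;> intro h <;> linarith

lemma modulator_mul_eq (c : ℝ) (hM : runMax V k ≠ 0) (hV : V k ≠ 0) :
    (c - drawdown V k) / (1 - drawdown V k) * V k = V k - (1 - c) * runMax V k := by
  rw [one_sub_drawdown hM, drawdown]
  field_simp
  ring

end Drawdown

theorem generalized_drawdown_modulation_sufficiency_general
    (n N : ℕ) (Xmin Xmax : Fin n → ℝ) (dmax : ℝ)
    (hdmax0 : 0 < dmax) (hdmax1 : dmax < 1)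
    (V : ℕ → ℝ) (I X : ℕ → Fin n → ℝ)
    (hV0 : 0 < V 0)
    (hrec : ∀ k, V (k + 1) = V k + ∑ i, I k i * X k i)
    (hX : ∀ k i, Xmin i ≤ X k i ∧ X k i ≤ Xmax i)
    (hI : ∀ k < N,
      (∑ i, |Xmin i| * max (I k i) 0) - (∑ i, Xmax i * min (I k i) 0)
        ≤ ((dmax - drawdown V k) / (1 - drawdown V k)) * V k) :
    ∀ k ≤ N, drawdown V k ≤ dmax ∧ 0 < V k := by
  have hM := runMax_pos hV0
  have hfloor_pos : ∀ k, 0 < (1 - dmax) * runMax V k := fun k ↦ mul_pos (by linarith) (hM k)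
  have hfloor : ∀ k ≤ N, (1 - dmax) * runMax V k ≤ V k := by
    intro k hk
    induction k with
    | zero => rw [runMax_zero]; exact mul_le_of_le_one_left hV0.le (by linarith)
    | succ k ih =>
      have hVk := (hfloor_pos k).trans_le (ih (by omega))
      have hbudget : worstLoss Xmin Xmax (I k) ≤ _ := hI k (by omega)
      rw [modulator_mul_eq dmax (hM k).ne' hVk.ne'] at hbudget
      have hstep : (1 - dmax) * runMax V k ≤ V (k + 1) := by
        linarith [hrec k, neg_worstLoss_le_sum_mul (I := I k) (hX k)]
      exact one_sub_mul_runMax_succ_le hdmax0.le ((hfloor_pos k).trans_le hstep).le hstep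
  exact fun k hk ↦ ⟨(drawdown_le_iff (hM k)).2 (hfloor k hk), (hfloor_pos k).trans_le (hfloor k hk)⟩

theorem generalized_drawdown_modulation_sufficiency
    (n N : ℕ) (Xmin Xmax : Fin n → ℝ) (dmax : ℝ)
    (hb : ∀ i, -1 < Xmin i ∧ Xmin i < 0 ∧ 0 < Xmax i)
    (hdmax0 : 0 < dmax) (hdmax1 : dmax < 1)
    (V : ℕ → ℝ) (I X : ℕ → Fin n → ℝ)
    (hV0 : 0 < V 0)
    (hrec : ∀ k, V (k + 1) = V k + ∑ i, I k i * X k i)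
    (hX : ∀ k i, Xmin i ≤ X k i ∧ X k i ≤ Xmax i)
    (hI : ∀ k < N,
      (∑ i, |Xmin i| * max (I k i) 0) - (∑ i, Xmax i * min (I k i) 0)
        ≤ ((dmax - drawdown V k) / (1 - drawdown V k)) * V k) :
    ∀ k ≤ N, drawdown V k ≤ dmax ∧ 0 < V k :=
  generalized_drawdown_modulation_sufficiency_general n N Xmin Xmax dmax hdmax0 hdmax1 V I X hV0
    hrec hX hI
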